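/- arXiv:2203.01232 — 3 statements merged into one kernel-verified Lean document; each statement's English description precedes it below -/
import Mathlib

section
/- The maps σ_s(g) = conj(g) and σ_c(g) = transpose(conj(g))⁻¹ are real group structures on SL₂(ℂ), they are inequivalent, and every real group structure on SL₂(ℂ) is equivalent to one of them. -/
open Matrix

/-- `SL₂(ℂ)`. -/
abbrev SL2 := Matrix.SpecialLinearGroup (Fin 2) ℂ

/-- `σ_s(g) = conj g` (entrywise complex conjugation), the split real group structure
on `SL₂(ℂ)`, with real locus `SL₂(ℝ)`. -/
noncomputable def sigmaS : SL2 → SL2 := fun g => SpecialLinearGroup.map (starRingEnd ℂ) g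

/-- Transpose, as an operation on `SL₂(ℂ)`. -/
def transposeSL (g : SL2) : SL2 :=
  ⟨(g : Matrix (Fin 2) (Fin 2) ℂ)ᵀ, by rw [Matrix.det_transpose]; exact g.2⟩

/-- `σ_c(g) = (conj g)ᵀ⁻¹`, the compact real group structure on `SL₂(ℂ)`, with real
locus `SU₂(ℂ)`. -/
noncomputable def sigmaC : SL2 → SL2 := fun g => (transposeSL (sigmaS g))⁻¹

/-- A real group structure on `SL₂(ℂ)`: a group-theoretic involution which is
antiregular, i.e. differs from `σ_s` by a regular automorphism; since every algebraic
group automorphism of `SL₂` is inner, this means `σ = inn_c ∘ σ_s` for some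
`c ∈ SL₂(ℂ)`. -/
def IsRealGroupStructure (σ : SL2 → SL2) : Prop :=
  (∀ g h, σ (g * h) = σ g * σ h) ∧ (∀ g, σ (σ g) = g) ∧
    ∃ c : SL2, ∀ g, σ g = c * sigmaS g * c⁻¹

/-- Two real group structures on `SL₂(ℂ)` are equivalent if conjugate by an algebraic
group automorphism of `SL₂(ℂ)` (all of which are inner). -/
def EquivStruct (σ σ' : SL2 → SL2) : Prop :=
  ∃ ψ : SL2 ≃* SL2, (∃ c : SL2, ∀ g, ψ g = c * g * c⁻¹) ∧
    ∀ g, σ' g = ψ (σ (ψ.symm g))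

/-!
A real group structure is `twist c = inn c ∘ σ_s`, and it is an involution iff `u = c σ_s(c)`
is central, i.e. `u = ±1`. Conjugating by `inn A` replaces `c` by `A c σ_s(A)⁻¹`, and
`twist c = twist (-c)`; so `u` is an invariant of the equivalence class. It is `1` for
`σ_s = twist 1` and `-1` for `σ_c = twist w`, `w = !![0, -1; 1, 0]`, which are therefore
inequivalent. Conversely, if `σ_s(c) c = d²` with `d ∈ {1, w}` real, an averaging argument
(Hilbert 90) yields an invertible `b` with `b c = d σ_s(b)`; its determinant is real, and
rescaling `b` into `SL₂(ℂ)` shows `c ~ ±d`.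
-/

open ComplexConjugate

namespace SL2

local notation "M₂" => Matrix (Fin 2) (Fin 2) ℂ

lemma coe_sigmaS (g : SL2) : (sigmaS g : M₂) = (g : M₂).map conj := rfl

lemma sigmaS_mul (g h : SL2) : sigmaS (g * h) = sigmaS g * sigmaS h := map_mul _ g h

lemma sigmaS_inv (g : SL2) : sigmaS g⁻¹ = (sigmaS g)⁻¹ := map_inv _ g

lemma sigmaS_one : sigmaS 1 = 1 := map_one _

lemma sigmaS_neg (g : SL2) : sigmaS (-g) = -sigmaS g := by
  ext i j; simp [coe_sigmaS, Matrix.SpecialLinearGroup.coe_neg]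

lemma sigmaS_sigmaS (g : SL2) : sigmaS (sigmaS g) = g := by
  ext i j; simp [coe_sigmaS]

lemma neg_one_ne_one : (-1 : SL2) ≠ 1 := by
  intro h
  have := congrArg (fun g : SL2 => (g : M₂) 0 0) h
  norm_num [Matrix.SpecialLinearGroup.coe_neg] at this

lemma eq_one_or_eq_neg_one_of_forall_conj {u : SL2} (h : ∀ g, u * g * u⁻¹ = g) :
    u = 1 ∨ u = -1 := by
  have hu : u ∈ Subgroup.center SL2 :=
    Subgroup.mem_center_iff.2 fun g => (mul_inv_eq_iff_eq_mul.1 (h g)).symm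
  obtain ⟨r, hr, hru⟩ := Matrix.SpecialLinearGroup.mem_center_iff.1 hu
  rcases (by simpa using hr : r = 1 ∨ r = -1) with rfl | rfl
  · left; ext i j; simp [← hru]
  · right
    ext i j
    fin_cases i <;> fin_cases j <;> simp [← hru, Matrix.SpecialLinearGroup.coe_neg]

noncomputable def twist (c g : SL2) : SL2 := c * sigmaS g * c⁻¹

lemma twist_twist (c g : SL2) :
    twist c (twist c g) = c * sigmaS c * g * (c * sigmaS c)⁻¹ := by
  simp only [twist, sigmaS_mul, sigmaS_inv, sigmaS_sigmaS]; group

lemma twist_neg (c g : SL2) : twist (-c) g = twist c g := by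
  simp only [twist, neg_mul, mul_neg, inv_neg, neg_neg]

lemma mul_twist_mul_inv (A c g : SL2) :
    A * twist c (A⁻¹ * g * A) * A⁻¹ = twist (A * c * (sigmaS A)⁻¹) g := by
  simp only [twist, sigmaS_mul, sigmaS_inv]; group

lemma eq_or_eq_neg_of_twist_eq {c d : SL2} (h : ∀ g, twist c g = twist d g) :
    c = d ∨ c = -d := by
  have hcd : ∀ g, d⁻¹ * c * g * (d⁻¹ * c)⁻¹ = g := fun g => by
    have hg : c * g * c⁻¹ = d * g * d⁻¹ := by simpa [twist, sigmaS_sigmaS] using h (sigmaS g)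
    calc d⁻¹ * c * g * (d⁻¹ * c)⁻¹ = d⁻¹ * (c * g * c⁻¹) * d := by group
      _ = g := by rw [hg]; group
  rcases eq_one_or_eq_neg_one_of_forall_conj hcd with h | h
  · exact Or.inl (by rw [inv_mul_eq_one] at h; exact h.symm)
  · exact Or.inr (by rw [inv_mul_eq_iff_eq_mul, mul_neg_one] at h; exact h)

lemma isRealGroupStructure_twist_iff {c : SL2} :
    IsRealGroupStructure (twist c) ↔ c * sigmaS c = 1 ∨ c * sigmaS c = -1 := by
  refine ⟨fun h => eq_one_or_eq_neg_one_of_forall_conj fun g => ?_, fun h => ?_⟩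
  · rw [← twist_twist]; exact h.2.1 g
  refine ⟨fun g h => by simp only [twist, sigmaS_mul]; group, fun g => ?_, c, fun _ => rfl⟩
  rcases h with h | h <;> rw [twist_twist, h] <;> simp

lemma equivStruct_twist_iff {c d : SL2} :
    EquivStruct (twist c) (twist d) ↔
      ∃ A : SL2, A * c * (sigmaS A)⁻¹ = d ∨ A * c * (sigmaS A)⁻¹ = -d := by
  constructor
  · rintro ⟨ψ, ⟨p, hp⟩, h⟩
    have hsymm : ∀ g, ψ.symm g = p⁻¹ * g * p := fun g =>
      ψ.injective (by rw [ψ.apply_symm_apply, hp]; group)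
    exact ⟨p, eq_or_eq_neg_of_twist_eq fun g => by rw [h, hsymm, hp, mul_twist_mul_inv]⟩
  · rintro ⟨A, hA⟩
    refine ⟨MulAut.conj A, ⟨A, fun _ => rfl⟩, fun g => ?_⟩
    rw [MulAut.conj_apply, MulAut.conj_symm_apply, mul_twist_mul_inv]
    rcases hA with hA | hA
    · rw [hA]
    · rw [hA, twist_neg]

lemma exists_mul_sigmaS_eq_conj_of_equivStruct {c d : SL2} (h : EquivStruct (twist c) (twist d)) :
    ∃ A : SL2, d * sigmaS d = A * (c * sigmaS c) * A⁻¹ := by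
  obtain ⟨A, hA⟩ := equivStruct_twist_iff.1 h
  refine ⟨A, ?_⟩
  have key : (A * c * (sigmaS A)⁻¹) * sigmaS (A * c * (sigmaS A)⁻¹) =
      A * (c * sigmaS c) * A⁻¹ := by
    simp only [sigmaS_mul, sigmaS_inv, sigmaS_sigmaS]; group
  rcases hA with hA | hA
  · rwa [hA] at key
  · rwa [hA, sigmaS_neg, neg_mul_neg] at key

lemma exists_det_conj_smul_one_add_smul_ne_zero {M : M₂} (hM : M.det = 1) :
    ∃ α : ℂ, (conj α • 1 + α • M).det ≠ 0 := by
  by_contra! h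
  have h1 := h 1
  have hI := h Complex.I
  simp only [map_one, one_smul, det_fin_two, Fin.isValue, Matrix.add_apply, one_apply_eq, ne_eq,
    zero_ne_one, not_false_eq_true, one_apply_ne, zero_add, one_ne_zero, Complex.conj_I, neg_smul,
    Matrix.neg_apply, Matrix.smul_apply, smul_eq_mul, mul_one, mul_zero, neg_zero] at h1 hI hM
  have : (4 : ℂ) = 0 := by
    linear_combination h1 - hI - 2 * hM +
      (M 0 0 * M 1 1 - M 0 1 * M 1 0 + 1 - M 0 0 - M 1 1) * Complex.I_sq
  norm_num at this

lemma exists_sq_mul_eq_one {r : ℝ} (hr : r ≠ 0) :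
    ∃ z : ℂ, z ^ 2 * r = 1 ∧ (conj z = z ∨ conj z = -z) := by
  have hr0 : (r : ℂ) ≠ 0 := by exact_mod_cast hr
  rcases hr.lt_or_gt with hr | hr
  · have hs : ((Real.sqrt (-r) : ℝ) : ℂ) ^ 2 = -r := by
      exact_mod_cast Real.sq_sqrt (by linarith)
    have hs0 : ((Real.sqrt (-r) : ℝ) : ℂ) ≠ 0 := by
      exact_mod_cast (Real.sqrt_pos.2 (by linarith)).ne'
    refine ⟨Complex.I / Real.sqrt (-r), ?_, Or.inr ?_⟩
    · rw [div_pow, hs, Complex.I_sq]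
      field_simp
    · simp [neg_div]
  · have hs : ((Real.sqrt r : ℝ) : ℂ) ^ 2 = r := by exact_mod_cast Real.sq_sqrt hr.le
    have hs0 : ((Real.sqrt r : ℝ) : ℂ) ≠ 0 := by exact_mod_cast (Real.sqrt_pos.2 hr).ne'
    refine ⟨1 / Real.sqrt r, ?_, Or.inl ?_⟩
    · rw [div_pow, hs]
      field_simp
    · simp

/- Hilbert 90: `b = conj α • 1 + Φ (conj α • 1)` for the antilinear map
`Φ x = d * x.map conj * c⁻¹`, and `Φ` swaps the two summands, so `Φ b = b`. -/
lemma exists_det_ne_zero_mul_eq_mul_map_conj {c d : SL2} (hd : sigmaS d = d)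
    (h : sigmaS c * c = d * d) : ∃ b : M₂, b.det ≠ 0 ∧ b * c = d * b.map conj := by
  set M : SL2 := d⁻¹ * sigmaS c
  obtain ⟨α, hα⟩ := exists_det_conj_smul_one_add_smul_ne_zero M.2
  refine ⟨conj α • 1 + α • (M : M₂), hα, ?_⟩
  have hMc : (M : M₂) * c = d :=
    congrArg Subtype.val (show M * c = d by simp only [M, mul_assoc, h, inv_mul_cancel_left])
  have hdc : (d : M₂) * ((d⁻¹ * c : SL2) : M₂) = c :=
    congrArg Subtype.val (mul_inv_cancel_left d c)
  have hMbar : sigmaS M = d⁻¹ * c := by simp [M, sigmaS_mul, sigmaS_inv, hd, sigmaS_sigmaS]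
  have hmap : (conj α • 1 + α • (M : M₂)).map conj =
      α • 1 + conj α • ((d⁻¹ * c : SL2) : M₂) := by
    rw [← hMbar]; ext i j; simp [coe_sigmaS, Matrix.one_apply, apply_ite conj]
  rw [hmap, Matrix.add_mul, Matrix.mul_add, Matrix.smul_mul, Matrix.smul_mul, Matrix.one_mul, hMc,
    Matrix.mul_smul, Matrix.mul_smul, Matrix.mul_one, hdc, add_comm]

lemma exists_mul_mul_sigmaS_inv_eq {c d : SL2} (hd : sigmaS d = d) (h : sigmaS c * c = d * d) :
    ∃ A : SL2, A * c * (sigmaS A)⁻¹ = d ∨ A * c * (sigmaS A)⁻¹ = -d := by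
  obtain ⟨b, hb0, hb⟩ := exists_det_ne_zero_mul_eq_mul_map_conj hd h
  have hreal : conj b.det = b.det := by
    have := congrArg det hb
    rw [det_mul, det_mul, c.2, d.2, mul_one, one_mul] at this
    rw [RingHom.map_det, this]; rfl
  have hre : (b.det.re : ℂ) = b.det := Complex.conj_eq_iff_re.1 hreal
  obtain ⟨z, hz, hzbar⟩ := exists_sq_mul_eq_one (r := b.det.re)
    (fun h0 => hb0 (by rw [← hre, h0, Complex.ofReal_zero]))
  have hdet : (z • b).det = 1 := by rw [det_smul, Fintype.card_fin, ← hz, hre]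
  have hmap : (z • b).map conj = conj z • b.map conj := by ext i j; simp
  refine ⟨⟨z • b, hdet⟩, ?_⟩
  simp only [mul_inv_eq_iff_eq_mul]
  rcases hzbar with hz' | hz'
  · refine Or.inl (Subtype.ext ?_)
    show (z • b) * c = d * (z • b).map conj
    rw [hmap, hz', Matrix.mul_smul, ← hb, Matrix.smul_mul]
  · refine Or.inr (Subtype.ext ?_)
    show (z • b) * c = -(d : M₂) * (z • b).map conj
    rw [hmap, hz', neg_smul, Matrix.mul_neg, Matrix.neg_mul, neg_neg, Matrix.mul_smul, ← hb,
      Matrix.smul_mul]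

noncomputable def weyl : SL2 := ⟨!![0, -1; 1, 0], by simp [det_fin_two_of]⟩

lemma sigmaS_weyl : sigmaS weyl = weyl :=
  Subtype.ext <| show (!![0, -1; 1, 0] : M₂).map conj = !![0, -1; 1, 0] by
    ext i j; fin_cases i <;> fin_cases j <;> simp

lemma weyl_mul_weyl : weyl * weyl = -1 :=
  Subtype.ext <| show (!![0, -1; 1, 0] : M₂) * !![0, -1; 1, 0] = -1 by
    ext i j; fin_cases i <;> fin_cases j <;> simp

lemma inv_transposeSL (g : SL2) : (transposeSL g)⁻¹ = weyl * g * weyl⁻¹ :=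
  Subtype.ext <| show ((g : M₂)ᵀ).adjugate =
      (!![0, -1; 1, 0] : M₂) * g * (!![0, -1; 1, 0] : M₂).adjugate by
    rw [adjugate_fin_two, adjugate_fin_two]
    ext i j
    fin_cases i <;> fin_cases j <;> simp [Matrix.mul_apply, vecMul, dotProduct, Fin.sum_univ_two]

lemma sigmaS_eq_twist_one : sigmaS = twist 1 := funext fun _ => by simp [twist]

lemma sigmaC_eq_twist_weyl : sigmaC = twist weyl := funext fun _ => inv_transposeSL _

lemma sigmaS_mul_eq_neg_one {c : SL2} (h : c * sigmaS c = -1) : sigmaS c * c = -1 :=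
  calc sigmaS c * c = c⁻¹ * (c * sigmaS c) * c := by group
    _ = -1 := by rw [h]; simp

end SL2

open SL2

/-- `σ_s(g) = conj g` and `σ_c(g) = (conj g)ᵀ⁻¹` are real group structures on
`SL₂(ℂ)`, they are inequivalent, and every real group structure on `SL₂(ℂ)` is
equivalent to one of them. -/
theorem real_structures_on_SL2 :
    IsRealGroupStructure sigmaS ∧ IsRealGroupStructure sigmaC ∧
    ¬ EquivStruct sigmaS sigmaC ∧
    ∀ σ : SL2 → SL2, IsRealGroupStructure σ →
      EquivStruct σ sigmaS ∨ EquivStruct σ sigmaC := by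
  rw [sigmaC_eq_twist_weyl, sigmaS_eq_twist_one]
  have hw : weyl * sigmaS weyl = -1 := by rw [sigmaS_weyl, weyl_mul_weyl]
  refine ⟨isRealGroupStructure_twist_iff.2 (Or.inl (by rw [sigmaS_one, mul_one])),
    isRealGroupStructure_twist_iff.2 (Or.inr hw), fun h => ?_, fun σ hσ => ?_⟩
  · obtain ⟨A, hA⟩ := exists_mul_sigmaS_eq_conj_of_equivStruct h
    rw [hw, sigmaS_one, mul_one, mul_one, mul_inv_cancel] at hA
    exact neg_one_ne_one hA
  · obtain ⟨c, hc⟩ := hσ.2.2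
    obtain rfl : σ = twist c := funext hc
    rcases isRealGroupStructure_twist_iff.1 hσ with h | h
    · exact Or.inl <| equivStruct_twist_iff.2 <|
        exists_mul_mul_sigmaS_inv_eq sigmaS_one (by rw [mul_one]; exact mul_eq_one_comm.1 h)
    · exact Or.inr <| equivStruct_twist_iff.2 <|
        exists_mul_mul_sigmaS_inv_eq sigmaS_weyl
          (by rw [weyl_mul_weyl]; exact sigmaS_mul_eq_neg_one h)
end

section
/- Let G be a group with an involutive antiautomorphism-compatible structure σ (a real group structure) and let H ≤ G be a subgroup. The homogeneous space X = G/H admits a map μ: G/H → G/H satisfying μ(k H) = σ(k) t H for all k, which is a well-defined involution compatible with the twisted action (μ(g·x) = σ(g)·μ(x)) if and only if there exists t ∈ G with σ(H) = tHt⁻¹ and σ(t)t ∈ H. -/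
/-- Lemma (criterion for equivariant real structures on homogeneous spaces): let `G`
be a group, `σ` an involutive automorphism of `G` (the group-theoretic content of a
real group structure), and `H ≤ G`. The homogeneous space `X = G/H` admits a
`(G,σ)`-equivariant real structure, i.e. an involution `μ` of `G/H` with
`μ(g·x) = σ(g)·μ(x)` — necessarily of the form `μ(kH) = σ(k)tH` — if and only if
there exists `t ∈ G` with `σ(H) = tHt⁻¹` and `σ(t)t ∈ H`. -/
theorem equivariant_real_structure_on_homogeneous_space_iff
    {G : Type*} [Group G] (σ : G →* G) (hσ : ∀ g, σ (σ g) = g) (H : Subgroup G) :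
    (∃ μ : G ⧸ H → G ⧸ H,
        (∃ t : G, ∀ k : G, μ (k : G ⧸ H) = ((σ k * t : G) : G ⧸ H)) ∧
        (∀ x, μ (μ x) = x) ∧
        (∀ (g : G) (x : G ⧸ H), μ (g • x) = σ g • μ x)) ↔
    ∃ t : G, Subgroup.map σ H = Subgroup.map (MulAut.conj t).toMonoidHom H ∧
      σ t * t ∈ H := by
  constructor
  · rintro ⟨μ, ⟨t, hμ⟩, hinv, -⟩
    -- σ t * t ∈ H
    have hst : σ t * t ∈ H := by
      have h1 : μ ((1 : G) : G ⧸ H) = ((t : G) : G ⧸ H) := by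
        simpa using hμ 1
      have h2 : μ ((t : G) : G ⧸ H) = ((σ t * t : G) : G ⧸ H) := hμ t
      have h3 : ((σ t * t : G) : G ⧸ H) = ((1 : G) : G ⧸ H) := by
        rw [← h2, ← h1, hinv]
      have := (QuotientGroup.eq).mp h3
      simpa using (inv_mem this)
    -- key claim
    have claimA : ∀ h ∈ H, t⁻¹ * σ h * t ∈ H := by
      intro h hh
      have he : ((h : G) : G ⧸ H) = ((1 : G) : G ⧸ H) := by
        apply (QuotientGroup.eq).mpr; simpa using (inv_mem hh)
      have h4 : ((σ h * t : G) : G ⧸ H) = ((t : G) : G ⧸ H) := by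
        have := hμ h
        rw [he] at this
        rw [← this]
        simpa using hμ 1
      have h5 := (QuotientGroup.eq).mp h4
      have : (σ h * t)⁻¹ * t = t⁻¹ * (σ h)⁻¹ * t := by group
      rw [this] at h5
      have := inv_mem h5
      simpa [mul_assoc] using this
    refine ⟨t, ?_, hst⟩
    ext x
    simp only [Subgroup.mem_map, MulEquiv.coe_toMonoidHom, MulAut.conj_apply]
    constructor
    · rintro ⟨h, hh, rfl⟩
      exact ⟨t⁻¹ * σ h * t, claimA h hh, by group⟩
    · rintro ⟨h, hh, rfl⟩
      refine ⟨σ (t * h * t⁻¹), ?_, hσ _⟩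
      have : σ (t * h * t⁻¹) = (σ t * t) * (t⁻¹ * σ h * t) * (σ t * t)⁻¹ := by
        simp [map_mul]
        group
      rw [this]
      exact H.mul_mem (H.mul_mem hst (claimA h hh)) (inv_mem hst)
  · rintro ⟨t, hmap, hst⟩
    have claimA : ∀ h ∈ H, t⁻¹ * σ h * t ∈ H := by
      intro h hh
      have : σ h ∈ Subgroup.map σ H := ⟨h, hh, rfl⟩
      rw [hmap] at this
      obtain ⟨h', hh', he⟩ := this
      simp only [MulEquiv.coe_toMonoidHom, MulAut.conj_apply] at he
      have : t⁻¹ * σ h * t = h' := by rw [← he]; group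
      rw [this]; exact hh'
    refine ⟨fun x => Quotient.liftOn' x (fun k => ((σ k * t : G) : G ⧸ H)) ?_,
      ⟨t, fun k => rfl⟩, ?_, ?_⟩
    · intro a b hab
      have hab' : a⁻¹ * b ∈ H := QuotientGroup.leftRel_apply.mp hab
      apply (QuotientGroup.eq).mpr
      have : (σ a * t)⁻¹ * (σ b * t) = t⁻¹ * σ (a⁻¹ * b) * t := by
        simp [map_mul]
        group
      rw [this]
      exact claimA _ hab'
    · intro x
      induction x using QuotientGroup.induction_on with
      | H k =>
        show ((σ (σ k * t) * t : G) : G ⧸ H) = (k : G ⧸ H)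
        symm
        apply (QuotientGroup.eq).mpr
        have : k⁻¹ * (σ (σ k * t) * t) = σ t * t := by
          simp [map_mul, hσ]
          group
        rw [this]; exact hst
    · intro g x
      induction x using QuotientGroup.induction_on with
      | H k =>
        show ((σ (g * k) * t : G) : G ⧸ H) = σ g • ((σ k * t : G) : G ⧸ H)
        rw [map_mul, mul_assoc]
        rfl
end

section
/- Let G = G_m² (pairs of units), H = {1} × G_m, σ(u,v) = (conj(u), conj(v)⁻¹), φ(u,v) = (uv, v), and σ' = φ ∘ σ ∘ φ⁻¹. Then σ(H) = H but σ'(H) = {(t², t) : t ∈ G_m} ≠ H, and moreover no element g ∈ G satisfies g σ'(H) g⁻¹ = H (since G is abelian). Consequently G/H admits a (G,σ)-equivariant real structure but no (G,σ')-equivariant real structure. -/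
/-- Complex conjugation on `ℂˣ`. -/
noncomputable def cU : ℂˣ →* ℂˣ := Units.map (starRingEnd ℂ).toMonoidHom

/-- `σ(u,v) = (conj u, (conj v)⁻¹)`, a real group structure on `G = 𝔾ₘ²`. -/
noncomputable def sigma : ℂˣ × ℂˣ →* ℂˣ × ℂˣ :=
  (cU.comp (MonoidHom.fst ℂˣ ℂˣ)).prod ((invMonoidHom.comp cU).comp (MonoidHom.snd ℂˣ ℂˣ))

/-- The algebraic group automorphism `φ(u,v) = (uv, v)` of `𝔾ₘ²`. -/
def phi : (ℂˣ × ℂˣ) ≃* (ℂˣ × ℂˣ) where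
  toFun p := (p.1 * p.2, p.2)
  invFun p := (p.1 * p.2⁻¹, p.2)
  left_inv p := by ext <;> simp
  right_inv p := by ext <;> simp
  map_mul' p q := by
    ext <;> simp [mul_mul_mul_comm]

/-- `σ' = φ ∘ σ ∘ φ⁻¹`, so that `σ'(u,v) = (conj(u) conj(v)⁻², conj(v)⁻¹)`. -/
noncomputable def sigma' : ℂˣ × ℂˣ →* ℂˣ × ℂˣ :=
  (phi.toMonoidHom.comp sigma).comp phi.symm.toMonoidHom

/-- The subgroup `H = {1} × 𝔾ₘ` of `G = 𝔾ₘ²`. -/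
def Hsub : Subgroup (ℂˣ × ℂˣ) := (⊥ : Subgroup ℂˣ).prod ⊤

/-- The subgroup `{(t², t) : t ∈ 𝔾ₘ}` of `G = 𝔾ₘ²`. -/
def Ksub : Subgroup (ℂˣ × ℂˣ) :=
  MonoidHom.range ((powMonoidHom 2).prod (MonoidHom.id ℂˣ))

lemma mem_Hsub (p : ℂˣ × ℂˣ) : p ∈ Hsub ↔ p.1 = 1 := by
  simp [Hsub, Subgroup.mem_prod]

lemma cU_cU (u : ℂˣ) : cU (cU u) = u := by
  ext
  simp [cU]

lemma cU_bij : Function.Bijective cU :=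
  Function.bijective_iff_has_inverse.mpr ⟨cU, cU_cU, cU_cU⟩

lemma sigma_apply (p : ℂˣ × ℂˣ) : sigma p = (cU p.1, (cU p.2)⁻¹) := rfl

lemma sigma'_apply (p : ℂˣ × ℂˣ) :
    sigma' p = (cU p.1 * ((cU p.2)⁻¹) ^ 2, (cU p.2)⁻¹) := by
  simp only [sigma', MonoidHom.comp_apply, MulEquiv.coe_toMonoidHom]
  show phi (sigma (phi.symm p)) = _
  have : phi.symm p = (p.1 * p.2⁻¹, p.2) := rfl
  rw [this, sigma_apply]
  show (cU (p.1 * p.2⁻¹) * (cU p.2)⁻¹, (cU p.2)⁻¹) = _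
  ext <;> simp [pow_two, mul_assoc]

noncomputable def u2 : ℂˣ := Units.mk0 2 (by norm_num)

lemma u2_val : (u2 : ℂ) = 2 := rfl

lemma cU_u2 : cU u2 = u2 := by
  ext
  rw [show ((cU u2 : ℂˣ) : ℂ) = (starRingEnd ℂ) (u2 : ℂ) from rfl, u2_val]
  simp [Complex.ext_iff]

lemma u2_sq_ne_one : u2 ^ 2 ≠ 1 := by
  intro h
  have : ((u2 : ℂ)) ^ 2 = 1 := by rw [← Units.val_pow_eq_pow_val, h, Units.val_one]
  rw [u2_val] at this
  norm_num at this

/-- Example: with `G = 𝔾ₘ²`, `H = {1} × 𝔾ₘ`, `σ(u,v) = (conj u, (conj v)⁻¹)`,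
`φ(u,v) = (uv,v)` and `σ' = φ ∘ σ ∘ φ⁻¹`, one has `σ(H) = H` but
`σ'(H) = {(t²,t)} ≠ H`; since `G` is abelian no conjugate of `σ'(H)` equals `H`, and
consequently `G/H` admits a `(G,σ)`-equivariant real structure but no
`(G,σ')`-equivariant real structure. -/
theorem example_inner_twist_no_real_structure :
    Subgroup.map sigma Hsub = Hsub ∧
    Subgroup.map sigma' Hsub = Ksub ∧
    Ksub ≠ Hsub ∧
    (∀ g : ℂˣ × ℂˣ,
      Subgroup.map (MulAut.conj g).toMonoidHom (Subgroup.map sigma' Hsub) ≠ Hsub) ∧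
    (∃ μ : (ℂˣ × ℂˣ) ⧸ Hsub → (ℂˣ × ℂˣ) ⧸ Hsub,
      (∀ x, μ (μ x) = x) ∧ ∀ (g : ℂˣ × ℂˣ) x, μ (g • x) = sigma g • μ x) ∧
    ¬(∃ μ : (ℂˣ × ℂˣ) ⧸ Hsub → (ℂˣ × ℂˣ) ⧸ Hsub,
      (∀ x, μ (μ x) = x) ∧ ∀ (g : ℂˣ × ℂˣ) x, μ (g • x) = sigma' g • μ x) := by
  have h1 : Subgroup.map sigma Hsub = Hsub := by
    ext p
    simp only [Subgroup.mem_map, mem_Hsub]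
    constructor
    · rintro ⟨q, hq, rfl⟩
      rw [sigma_apply]
      simp [hq]
    · intro hp
      refine ⟨(1, (cU p.2)⁻¹), rfl, ?_⟩
      rw [sigma_apply]
      ext
      · simp [hp, cU]
      · simp [cU_cU]
  have hKH : Ksub ≠ Hsub := by
    intro h
    have hm : (u2 ^ 2, u2) ∈ Ksub := ⟨u2, rfl⟩
    rw [h, mem_Hsub] at hm
    exact u2_sq_ne_one hm
  have h2 : Subgroup.map sigma' Hsub = Ksub := by
    ext p
    simp only [Subgroup.mem_map, mem_Hsub, Ksub, MonoidHom.mem_range]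
    constructor
    · rintro ⟨q, hq, rfl⟩
      refine ⟨(cU q.2)⁻¹, ?_⟩
      rw [sigma'_apply, hq, map_one, one_mul]
      rfl
    · rintro ⟨t, rfl⟩
      obtain ⟨s, hs⟩ := cU_bij.surjective t⁻¹
      refine ⟨(1, s), rfl, ?_⟩
      rw [sigma'_apply]
      simp only [map_one, one_mul, hs, inv_inv]
      rfl
  refine ⟨h1, h2, hKH, ?_, ?_, ?_⟩
  · intro g
    rw [h2]
    have hconj : ∀ q : ℂˣ × ℂˣ, (MulAut.conj g).toMonoidHom q = q := by
      intro q
      show g * q * g⁻¹ = q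
      rw [mul_comm g q, mul_inv_cancel_right]
    have : Subgroup.map (MulAut.conj g).toMonoidHom Ksub = Ksub := by
      ext p
      simp only [Subgroup.mem_map, hconj]
      constructor
      · rintro ⟨q, hq, rfl⟩; exact hq
      · intro hp; exact ⟨p, hp, rfl⟩
    rw [this]
    exact hKH
  · have hle : Hsub ≤ Subgroup.comap sigma Hsub := by
      intro p hp
      rw [Subgroup.mem_comap, mem_Hsub, sigma_apply]
      show cU p.1 = 1
      rw [(mem_Hsub p).mp hp, map_one]
    refine ⟨QuotientGroup.map Hsub Hsub sigma hle, ?_, ?_⟩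
    · intro x
      obtain ⟨y, rfl⟩ := QuotientGroup.mk_surjective x
      rw [QuotientGroup.map_mk, QuotientGroup.map_mk]
      congr 1
      rw [sigma_apply, sigma_apply]
      ext <;> simp [cU_cU]
    · intro g x
      obtain ⟨y, rfl⟩ := QuotientGroup.mk_surjective x
      show QuotientGroup.map Hsub Hsub sigma hle ↑(g * y) = ↑(sigma g * sigma y)
      rw [QuotientGroup.map_mk, map_mul]
  · rintro ⟨μ, -, hequiv⟩
    set h : ℂˣ × ℂˣ := (1, u2) with hh
    have hHh : h ∈ Hsub := (mem_Hsub h).mpr rfl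
    have h1q : ((h : ℂˣ × ℂˣ) : (ℂˣ × ℂˣ) ⧸ Hsub) = ((1 : ℂˣ × ℂˣ) : (ℂˣ × ℂˣ) ⧸ Hsub) :=
      (QuotientGroup.eq_one_iff h).mpr hHh
    obtain ⟨t, ht⟩ := QuotientGroup.mk_surjective (μ ((1 : ℂˣ × ℂˣ) : (ℂˣ × ℂˣ) ⧸ Hsub))
    have e1 : μ ((1 : ℂˣ × ℂˣ) : (ℂˣ × ℂˣ) ⧸ Hsub)
        = ((sigma' h * t : ℂˣ × ℂˣ) : (ℂˣ × ℂˣ) ⧸ Hsub) := by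
      have h3 : ((1 : ℂˣ × ℂˣ) : (ℂˣ × ℂˣ) ⧸ Hsub) = h • ((1 : ℂˣ × ℂˣ) : (ℂˣ × ℂˣ) ⧸ Hsub) := by
        show _ = ((h * 1 : ℂˣ × ℂˣ) : (ℂˣ × ℂˣ) ⧸ Hsub)
        rw [mul_one, h1q]
      rw [h3, hequiv, ← ht]
      rfl
    rw [← ht] at e1
    have hmem : t⁻¹ * (sigma' h * t) ∈ Hsub := QuotientGroup.eq.mp e1
    rw [mul_comm (sigma' h) t, inv_mul_cancel_left, mem_Hsub, sigma'_apply] at hmem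
    have h2' : cU (1 : ℂˣ) * ((cU u2)⁻¹) ^ 2 = 1 := hmem
    rw [map_one, one_mul, cU_u2] at h2'
    apply u2_sq_ne_one
    have := congrArg (· ^ 2) (inv_pow u2 2 ▸ h2')
    rw [inv_pow] at h2'
    have : (u2 ^ 2)⁻¹ = 1 := h2'
    calc u2 ^ 2 = ((u2 ^ 2)⁻¹)⁻¹ := by rw [inv_inv]
    _ = 1 := by rw [this, inv_one]
end
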